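/- arXiv:2511.12623 — 5 statements merged into one kernel-verified Lean document; each statement's English description precedes it below -/
import Mathlib

section
/- With the Wigner bordering setup, let z ∈ ℝ with z ∉ {λ_1, …, λ_N} satisfy f(z) = 0. Then the vector w ∈ ℝ^{N+1} defined by w = Σ_{j=1}^N (g_j/(z − λ_j)) (u_j, 0) + e_{N+1} (where e_{N+1} is the last standard basis vector of ℝ^{N+1} and (u_j,0) is u_j extended by a zero last coordinate) is a nonzero eigenvector of H_{N+1} with eigenvalue z, and its squared Euclidean norm equals 1 + Σ_{j=1}^N g_j²/(z − λ_j)². -/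
/-!
For a vector of the form `(v, 1)` the eigenvalue equation of the bordered matrix splits into
`H v + g = z v` and `⟨g, v⟩ + g_{N+1} = z`. Expanding `g = ∑ g_j u_j` in the orthonormal
eigenbasis, the first equation is solved by `v = (z - H)⁻¹ g = ∑ g_j / (z - λ_j) u_j`; then
`⟨g, v⟩ = ∑ g_j² / (z - λ_j)`, so the second equation is exactly `f(z) = 0`. The norm of `(v, 1)`
is read off by orthonormality.
-/

open Matrix

/-- The bordered matrix `[[H, g], [gᵀ, a]]` of size `(N+1) × (N+1)`. -/
def borderMatrix {N : ℕ} (H : Matrix (Fin N) (Fin N) ℝ) (g : Fin N → ℝ) (a : ℝ) :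
    Matrix (Fin (N + 1)) (Fin (N + 1)) ℝ :=
  fun i => Fin.lastCases (Fin.snoc g a) (fun i' => Fin.snoc (H i') (g i')) i

theorem Fin.snoc_dotProduct_snoc {R : Type*} [NonUnitalNonAssocSemiring R] {N : ℕ}
    (x y : Fin N → R) (a b : R) :
    (Fin.snoc x a : Fin (N + 1) → R) ⬝ᵥ Fin.snoc y b = x ⬝ᵥ y + a * b := by
  simp [dotProduct, Fin.sum_univ_castSucc]

theorem Fin.smul_snoc {R : Type*} [Mul R] {N : ℕ} (c : R) (x : Fin N → R) (a : R) :
    c • (Fin.snoc x a : Fin (N + 1) → R) = Fin.snoc (c • x) (c * a) := by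
  ext i
  induction i using Fin.lastCases <;> simp

theorem sum_smul_snoc_zero_add_single_last {R ι : Type*} [Semiring R] [Fintype ι] {N : ℕ}
    (c : ι → R) (u : ι → Fin N → R) :
    ∑ j, c j • (Fin.snoc (u j) 0 : Fin (N + 1) → R) + Pi.single (Fin.last N) 1 =
      Fin.snoc (∑ j, c j • u j) 1 := by
  ext i
  induction i using Fin.lastCases with
  | last => simp
  | cast i => simp [Finset.sum_apply, (Fin.castSucc_lt_last i).ne]

theorem borderMatrix_mulVec_snoc {N : ℕ} (H : Matrix (Fin N) (Fin N) ℝ) (g : Fin N → ℝ)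
    (a : ℝ) (v : Fin N → ℝ) (t : ℝ) :
    borderMatrix H g a *ᵥ Fin.snoc v t = Fin.snoc (H *ᵥ v + t • g) (g ⬝ᵥ v + a * t) := by
  ext i
  induction i using Fin.lastCases with
  | last => simp [borderMatrix, mulVec, Fin.snoc_dotProduct_snoc]
  | cast i =>
    simp [borderMatrix, mulVec, Fin.snoc_dotProduct_snoc, dotProduct_comm g, mul_comm]

section Orthonormal

variable {R n : Type*} [Fintype n]

theorem sum_smul_dotProduct_sum_smul_of_orthonormal {ι : Type*} [Fintype ι] [DecidableEq ι]
    [CommSemiring R] {u : ι → n → R} (horth : ∀ i j, u i ⬝ᵥ u j = if i = j then 1 else 0)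
    (c d : ι → R) :
    (∑ i, c i • u i) ⬝ᵥ (∑ j, d j • u j) = ∑ i, c i * d i := by
  simp [sum_dotProduct, dotProduct_sum, horth, mul_comm]

theorem sum_dotProduct_smul_of_orthonormal [DecidableEq n] [CommRing R] {u : n → n → R}
    (horth : ∀ i j, u i ⬝ᵥ u j = if i = j then 1 else 0) (x : n → R) :
    ∑ j, (u j ⬝ᵥ x) • u j = x := by
  have hUUt : of u * (of u)ᵀ = 1 := by
    ext i j
    simpa [mul_apply, one_apply, dotProduct] using horth i j
  have hUtU : (of u)ᵀ * of u = 1 := mul_eq_one_comm.mp hUUt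
  calc ∑ j, (u j ⬝ᵥ x) • u j = (of u)ᵀ *ᵥ (of u *ᵥ x) := by
        rw [mulVec_transpose, vecMul_eq_sum]
        rfl
    _ = x := by rw [mulVec_mulVec, hUtU, one_mulVec]

variable [Field R]

/-- `(z - H)⁻¹ g`, written in an eigenbasis `u` of `H` with eigenvalues `lam`. -/
def resolventExpansion (u : n → n → R) (lam g : n → R) (z : R) : n → R :=
  ∑ j, ((u j ⬝ᵥ g) / (z - lam j)) • u j

theorem mulVec_resolventExpansion_add [DecidableEq n] {H : Matrix n n R} {u : n → n → R}
    {lam : n → R} (heig : ∀ j, H *ᵥ u j = lam j • u j)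
    (horth : ∀ i j, u i ⬝ᵥ u j = if i = j then 1 else 0) (g : n → R) {z : R}
    (hz : ∀ j, z ≠ lam j) :
    H *ᵥ resolventExpansion u lam g z + g = z • resolventExpansion u lam g z := by
  conv_lhs => arg 2; rw [← sum_dotProduct_smul_of_orthonormal horth g]
  simp only [resolventExpansion, mulVec_sum, mulVec_smul, heig, Finset.smul_sum, smul_smul,
    ← Finset.sum_add_distrib, ← add_smul]
  refine Finset.sum_congr rfl fun j _ => ?_
  have hzj : z - lam j ≠ 0 := sub_ne_zero.mpr (hz j)
  congr 1
  field_simp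
  ring

theorem dotProduct_resolventExpansion (u : n → n → R) (lam g : n → R) (z : R) :
    g ⬝ᵥ resolventExpansion u lam g z = ∑ j, (u j ⬝ᵥ g) ^ 2 / (z - lam j) := by
  simp only [resolventExpansion, dotProduct_sum, dotProduct_smul, smul_eq_mul]
  exact Finset.sum_congr rfl fun j _ => by rw [dotProduct_comm g]; ring

theorem resolventExpansion_dotProduct_self [DecidableEq n] {u : n → n → R} (lam : n → R)
    (horth : ∀ i j, u i ⬝ᵥ u j = if i = j then 1 else 0) (g : n → R) (z : R) :
    resolventExpansion u lam g z ⬝ᵥ resolventExpansion u lam g z =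
      ∑ j, (u j ⬝ᵥ g) ^ 2 / (z - lam j) ^ 2 := by
  rw [resolventExpansion, sum_smul_dotProduct_sum_smul_of_orthonormal horth]
  exact Finset.sum_congr rfl fun j _ => by rw [← sq, div_pow]

end Orthonormal

theorem explicit_eigenvector_of_secular_zero_general
    (N : ℕ) (HN : Matrix (Fin N) (Fin N) ℝ)
    (lam : Fin N → ℝ)
    (u : Fin N → Fin N → ℝ)
    (heig : ∀ i, HN.mulVec (u i) = lam i • u i)
    (horth : ∀ i j, u i ⬝ᵥ u j = if i = j then (1 : ℝ) else 0)
    (g : Fin N → ℝ) (gN1 : ℝ)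
    (z : ℝ) (hz : ∀ j, z ≠ lam j)
    (hroot : gN1 - z - ∑ j, (u j ⬝ᵥ g) ^ 2 / (lam j - z) = 0)
    (w : Fin (N + 1) → ℝ)
    (hw : w = (∑ j, ((u j ⬝ᵥ g) / (z - lam j)) • (Fin.snoc (u j) 0 : Fin (N + 1) → ℝ)) +
        Pi.single (Fin.last N) (1 : ℝ)) :
    w ≠ 0 ∧ (borderMatrix HN g gN1).mulVec w = z • w ∧
      w ⬝ᵥ w = 1 + ∑ j, (u j ⬝ᵥ g) ^ 2 / (z - lam j) ^ 2 := by
  rw [sum_smul_snoc_zero_add_single_last] at hw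
  change w = Fin.snoc (resolventExpansion u lam g z) 1 at hw
  subst hw
  have hsecular : g ⬝ᵥ resolventExpansion u lam g z + gN1 = z := by
    have hflip : ∑ j, (u j ⬝ᵥ g) ^ 2 / (lam j - z) = -∑ j, (u j ⬝ᵥ g) ^ 2 / (z - lam j) := by
      simp only [← Finset.sum_neg_distrib, ← div_neg, neg_sub]
    rw [dotProduct_resolventExpansion]
    linarith
  refine ⟨fun h => by simpa using congrFun h (Fin.last N), ?_, ?_⟩
  · rw [borderMatrix_mulVec_snoc, Fin.smul_snoc, one_smul, mul_one, mul_one,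
      mulVec_resolventExpansion_add heig horth g hz, hsecular]
  · rw [Fin.snoc_dotProduct_snoc, resolventExpansion_dotProduct_self lam horth, mul_one,
      add_comm]

/-- **Explicit eigenvector of the bordered matrix at a zero of the secular function.**
If `z ∉ {λ_1, …, λ_N}` satisfies `f(z) = 0`, then
`w = ∑ⱼ (gⱼ/(z - λⱼ)) (uⱼ, 0) + e_{N+1}` is a nonzero eigenvector of `H_{N+1}` with
eigenvalue `z`, and `‖w‖² = 1 + ∑ⱼ gⱼ²/(z - λⱼ)²`. -/
theorem explicit_eigenvector_of_secular_zero
    (N : ℕ) (HN : Matrix (Fin N) (Fin N) ℝ) (hsymm : HN.IsSymm)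
    (lam : Fin N → ℝ) (hmono : StrictMono lam)
    (u : Fin N → Fin N → ℝ)
    (heig : ∀ i, HN.mulVec (u i) = lam i • u i)
    (horth : ∀ i j, u i ⬝ᵥ u j = if i = j then (1 : ℝ) else 0)
    (g : Fin N → ℝ) (gN1 : ℝ)
    (z : ℝ) (hz : ∀ j, z ≠ lam j)
    (hroot : gN1 - z - ∑ j, (u j ⬝ᵥ g) ^ 2 / (lam j - z) = 0)
    (w : Fin (N + 1) → ℝ)
    (hw : w = (∑ j, ((u j ⬝ᵥ g) / (z - lam j)) • (Fin.snoc (u j) 0 : Fin (N + 1) → ℝ)) +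
        Pi.single (Fin.last N) (1 : ℝ)) :
    w ≠ 0 ∧ (borderMatrix HN g gN1).mulVec w = z • w ∧
      w ⬝ᵥ w = 1 + ∑ j, (u j ⬝ᵥ g) ^ 2 / (z - lam j) ^ 2 :=
  explicit_eigenvector_of_secular_zero_general N HN lam u heig horth g gN1 z hz hroot w hw
end

section
/- With the Wigner bordering setup, let z ∈ ℝ with z ∉ {λ_1, …, λ_N} be an eigenvalue of H_{N+1} (equivalently f(z) = 0), and let u' be the unit eigenvector of H_{N+1} for z normalized so that its last coordinate is positive. Then: (i) the derivative of the secular function satisfies f'(z) = −(1 + Σ_{j=1}^N g_j²/(z − λ_j)²); (ii) the overlaps satisfy Ω_j := ⟨u', (u_j,0)⟩ = (1/√|f'(z)|) · g_j/(z − λ_j) for every 1 ≤ j ≤ N, and the last coordinate of u' equals 1/√|f'(z)|. -/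
open Matrix

/-!
Writing `u' = (v, β)`, the first `N` rows of `H_{N+1} u' = z u'` read `(z - H_N) v = β g`;
pairing with the eigenvector `u_j` gives `⟨v, u_j⟩ = β g_j / (z - λ_j)`. Parseval then turns
`‖v‖² + β² = 1` into `β² (1 + ∑ g_j² / (z - λ_j)²) = 1`, and the bracket is exactly `-f'(z)`.
-/

theorem hasDerivAt_secular {ι : Type*} [Fintype ι] (a : ℝ) (c μ : ι → ℝ) {z : ℝ}
    (hz : ∀ j, z ≠ μ j) :
    HasDerivAt (fun t => a - t - ∑ j, c j / (μ j - t)) (-(1 + ∑ j, c j / (z - μ j) ^ 2)) z := by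
  have hterm : ∀ j, HasDerivAt (fun t => c j / (μ j - t)) (c j / (z - μ j) ^ 2) z := by
    intro j
    have h := (hasDerivAt_const z (c j)).fun_div ((hasDerivAt_id z).const_sub (μ j))
      (sub_ne_zero.2 (hz j).symm)
    refine h.congr_deriv ?_
    rw [id, show (μ j - z) ^ 2 = (z - μ j) ^ 2 by ring]
    ring
  have h : HasDerivAt (fun t => a - t - ∑ j, c j / (μ j - t))
      (0 - 1 - ∑ j, c j / (z - μ j) ^ 2) z :=
    ((hasDerivAt_const z a).sub (hasDerivAt_id z)).sub (HasDerivAt.fun_sum fun j _ => hterm j)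
  exact h.congr_deriv (by ring)

theorem dotProduct_eq_init_dotProduct_add_last {R : Type*} [NonUnitalNonAssocSemiring R] {n : ℕ}
    (v w : Fin (n + 1) → R) :
    v ⬝ᵥ w = Fin.init v ⬝ᵥ Fin.init w + v (Fin.last n) * w (Fin.last n) :=
  Fin.sum_univ_castSucc _

theorem borderMatrix_mulVec_init {N : ℕ} (H : Matrix (Fin N) (Fin N) ℝ) (g : Fin N → ℝ) (a : ℝ)
    (w : Fin (N + 1) → ℝ) :
    Fin.init (borderMatrix H g a *ᵥ w) = H *ᵥ Fin.init w + w (Fin.last N) • g := by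
  ext i
  simp [mulVec, dotProduct, Fin.sum_univ_castSucc, borderMatrix, Fin.init, mul_comm]

theorem dotProduct_mulVec_of_isSymm {R : Type*} [CommSemiring R] {n : Type*} [Fintype n]
    {H : Matrix n n R} (hH : H.IsSymm) {x : n → R} {μ : R} (hx : H *ᵥ x = μ • x) (v : n → R) :
    x ⬝ᵥ H *ᵥ v = μ * (x ⬝ᵥ v) := by
  rw [dotProduct_mulVec, ← mulVec_transpose, hH.eq, hx, smul_dotProduct, smul_eq_mul]

theorem dotProduct_self_eq_sum_sq {R : Type*} [CommRing R] {n : Type*} [Fintype n] [DecidableEq n]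
    {u : n → n → R} (horth : ∀ i j, u i ⬝ᵥ u j = if i = j then 1 else 0) (v : n → R) :
    v ⬝ᵥ v = ∑ j, (v ⬝ᵥ u j) ^ 2 := by
  have hUUt : of u * (of u)ᵀ = 1 := by
    ext i j
    simpa [mul_apply, one_apply, dotProduct] using horth i j
  calc v ⬝ᵥ v = (of u *ᵥ v) ⬝ᵥ (of u *ᵥ v) := by
        rw [dotProduct_mulVec, vecMul_mulVec, mul_eq_one_comm.mp hUUt, vecMul_one]
    _ = ∑ j, (v ⬝ᵥ u j) ^ 2 := by
        simp only [dotProduct, mulVec, of_apply, sq, mul_comm]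

theorem dotProduct_eq_of_mulVec_add_smul_eq_smul {R : Type*} [Field R] {n : Type*} [Fintype n]
    {H : Matrix n n R} (hH : H.IsSymm) {x : n → R} {μ : R} (hx : H *ᵥ x = μ • x)
    {v g : n → R} {β z : R} (hv : H *ᵥ v + β • g = z • v) (hz : z ≠ μ) :
    v ⬝ᵥ x = β * ((x ⬝ᵥ g) / (z - μ)) := by
  have h := congrArg (x ⬝ᵥ ·) hv
  simp only [dotProduct_add, dotProduct_smul, dotProduct_mulVec_of_isSymm hH hx, smul_eq_mul] at h
  rw [dotProduct_comm, mul_div_assoc', eq_div_iff (sub_ne_zero.2 hz)]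
  linear_combination -h

theorem overlap_master_equation_general
    (N : ℕ) (HN : Matrix (Fin N) (Fin N) ℝ) (hsymm : HN.IsSymm)
    (lam : Fin N → ℝ)
    (u : Fin N → Fin N → ℝ)
    (heig : ∀ i, HN.mulVec (u i) = lam i • u i)
    (horth : ∀ i j, u i ⬝ᵥ u j = if i = j then (1 : ℝ) else 0)
    (g : Fin N → ℝ) (gN1 : ℝ)
    (f : ℝ → ℝ)
    (hf : ∀ t : ℝ, f t = gN1 - t - ∑ j, (u j ⬝ᵥ g) ^ 2 / (lam j - t))
    (z : ℝ) (hz : ∀ j, z ≠ lam j)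
    (u' : Fin (N + 1) → ℝ)
    (hu'_unit : u' ⬝ᵥ u' = 1)
    (hu'_eig : (borderMatrix HN g gN1).mulVec u' = z • u')
    (hu'_last : 0 < u' (Fin.last N)) :
    deriv f z = -(1 + ∑ j, (u j ⬝ᵥ g) ^ 2 / (z - lam j) ^ 2) ∧
      (∀ j, u' ⬝ᵥ (Fin.snoc (u j) 0 : Fin (N + 1) → ℝ) =
        (1 / Real.sqrt |deriv f z|) * ((u j ⬝ᵥ g) / (z - lam j))) ∧
      u' (Fin.last N) = 1 / Real.sqrt |deriv f z| := by
  set S := ∑ j, (u j ⬝ᵥ g) ^ 2 / (z - lam j) ^ 2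
  have hderiv : deriv f z = -(1 + S) := by
    rw [funext hf]
    exact (hasDerivAt_secular gN1 _ lam hz).deriv
  set v := Fin.init u'
  set β := u' (Fin.last N)
  have hv : HN *ᵥ v + β • g = z • v := by
    rw [← borderMatrix_mulVec_init, hu'_eig]
    rfl
  have hoverlap : ∀ j, v ⬝ᵥ u j = β * ((u j ⬝ᵥ g) / (z - lam j)) := fun j =>
    dotProduct_eq_of_mulVec_add_smul_eq_smul hsymm (heig j) hv (hz j)
  have hnorm : β ^ 2 * (1 + S) = 1 := by
    have hsplit : 1 = v ⬝ᵥ v + β ^ 2 := by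
      rw [← hu'_unit, sq]
      exact dotProduct_eq_init_dotProduct_add_last u' u'
    have hvv : v ⬝ᵥ v = β ^ 2 * S := by
      rw [dotProduct_self_eq_sum_sq horth, Finset.mul_sum]
      refine Finset.sum_congr rfl fun j _ => ?_
      rw [hoverlap, mul_pow, div_pow]
    linear_combination -hvv - hsplit
  have hβ : β = 1 / Real.sqrt (1 + S) := by
    refine eq_one_div_of_mul_eq_one_left ?_
    rw [← Real.sqrt_sq hu'_last.le, ← Real.sqrt_mul (sq_nonneg β), hnorm, Real.sqrt_one]
  have hsqrt : Real.sqrt |deriv f z| = Real.sqrt (1 + S) := by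
    rw [hderiv, abs_neg, abs_of_nonneg (by positivity)]
  refine ⟨hderiv, fun j => ?_, by rw [hsqrt, hβ]⟩
  rw [dotProduct_eq_init_dotProduct_add_last, Fin.init_snoc, Fin.snoc_last, mul_zero, add_zero,
    hoverlap, hsqrt, hβ]

/-- **Master equation for the eigenvector overlaps (Wigner case).**
Let `z ∉ {λ_1, …, λ_N}` be an eigenvalue of `H_{N+1}` (equivalently `f(z) = 0`), and let
`u'` be the unit eigenvector of `H_{N+1}` for `z`, normalized so that its last coordinate
is positive.  Then (i) `f'(z) = -(1 + ∑ⱼ gⱼ²/(z - λⱼ)²)`, and (ii) the overlaps satisfy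
`Ωⱼ = ⟪u', (uⱼ,0)⟫ = (1/√|f'(z)|) · gⱼ/(z - λⱼ)` and `(u')_{N+1} = 1/√|f'(z)|`. -/
theorem overlap_master_equation
    (N : ℕ) (HN : Matrix (Fin N) (Fin N) ℝ) (hsymm : HN.IsSymm)
    (lam : Fin N → ℝ) (hmono : StrictMono lam)
    (u : Fin N → Fin N → ℝ)
    (heig : ∀ i, HN.mulVec (u i) = lam i • u i)
    (horth : ∀ i j, u i ⬝ᵥ u j = if i = j then (1 : ℝ) else 0)
    (g : Fin N → ℝ) (gN1 : ℝ)
    (f : ℝ → ℝ)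
    (hf : ∀ t : ℝ, f t = gN1 - t - ∑ j, (u j ⬝ᵥ g) ^ 2 / (lam j - t))
    (z : ℝ) (hz : ∀ j, z ≠ lam j) (hroot : f z = 0)
    (u' : Fin (N + 1) → ℝ)
    (hu'_unit : u' ⬝ᵥ u' = 1)
    (hu'_eig : (borderMatrix HN g gN1).mulVec u' = z • u')
    (hu'_last : 0 < u' (Fin.last N)) :
    deriv f z = -(1 + ∑ j, (u j ⬝ᵥ g) ^ 2 / (z - lam j) ^ 2) ∧
      (∀ j, u' ⬝ᵥ (Fin.snoc (u j) 0 : Fin (N + 1) → ℝ) =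
        (1 / Real.sqrt |deriv f z|) * ((u j ⬝ᵥ g) / (z - lam j))) ∧
      u' (Fin.last N) = 1 / Real.sqrt |deriv f z| :=
  overlap_master_equation_general N HN hsymm lam u heig horth g gN1 f hf z hz u' hu'_unit hu'_eig
    hu'_last
end

section
/- With the Wigner bordering setup, assume g_j ≠ 0 for every 1 ≤ j ≤ N. Let μ be any eigenvalue of H_{N+1} with unit eigenvector u', fix 1 ≤ i ≤ N, and set Ω_i := ⟨u', (u_i,0)⟩ and Δ_j := μ − λ_j (all Δ_j are nonzero under the stated assumption). Then the squared overlap satisfies (Ω_i)² = [ (Δ_i/g_i)² · (1 + Σ_{j=1}^N (g_j/Δ_j)²) ]^{−1}. -/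
open Matrix

/-- **Diagonal normalization of the overlaps (Wigner case).**
Assume `gⱼ = ⟪uⱼ, g⟫ ≠ 0` for all `j`.  For any eigenvalue `μ` of `H_{N+1}` with unit
eigenvector `u'` and any `i`, all gaps `Δⱼ = μ - λⱼ` are nonzero and the squared overlap
`Ωᵢ = ⟪u', (uᵢ,0)⟫` satisfies
`Ωᵢ² = [ (Δᵢ/gᵢ)² (1 + ∑ⱼ (gⱼ/Δⱼ)²) ]⁻¹`. -/
theorem overlap_squared_normalization
    (N : ℕ) (HN : Matrix (Fin N) (Fin N) ℝ) (hsymm : HN.IsSymm)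
    (lam : Fin N → ℝ) (hmono : StrictMono lam)
    (u : Fin N → Fin N → ℝ)
    (heig : ∀ i, HN.mulVec (u i) = lam i • u i)
    (horth : ∀ i j, u i ⬝ᵥ u j = if i = j then (1 : ℝ) else 0)
    (g : Fin N → ℝ) (gN1 : ℝ)
    (hg : ∀ j, u j ⬝ᵥ g ≠ 0)
    (mu : ℝ) (u' : Fin (N + 1) → ℝ)
    (hu'_unit : u' ⬝ᵥ u' = 1)
    (hu'_eig : (borderMatrix HN g gN1).mulVec u' = mu • u')
    (i : Fin N) :
    (∀ j : Fin N, mu - lam j ≠ 0) ∧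
      (u' ⬝ᵥ (Fin.snoc (u i) 0 : Fin (N + 1) → ℝ)) ^ 2 =
        (((mu - lam i) / (u i ⬝ᵥ g)) ^ 2 *
            (1 + ∑ j, ((u j ⬝ᵥ g) / (mu - lam j)) ^ 2))⁻¹ := by
  set v : Fin N → ℝ := fun k => u' k.castSucc with hv
  set t : ℝ := u' (Fin.last N) with ht
  -- first N rows of the eigenvalue equation
  have hrow : ∀ k : Fin N, HN.mulVec v k + g k * t = mu * v k := by
    intro k
    have h := congrFun hu'_eig k.castSucc
    simp only [borderMatrix, Matrix.mulVec, dotProduct, Pi.smul_apply, smul_eq_mul,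
      Fin.lastCases_castSucc] at h
    rw [Fin.sum_univ_castSucc] at h
    simp only [Fin.snoc_castSucc, Fin.snoc_last] at h
    simpa [Matrix.mulVec, dotProduct, hv, ht] using h
  -- last row
  have hlast : g ⬝ᵥ v + gN1 * t = mu * t := by
    have h := congrFun hu'_eig (Fin.last N)
    simp only [borderMatrix, Matrix.mulVec, dotProduct, Pi.smul_apply, smul_eq_mul,
      Fin.lastCases_last] at h
    rw [Fin.sum_univ_castSucc] at h
    simp only [Fin.snoc_castSucc, Fin.snoc_last] at h
    simpa [dotProduct, hv, ht] using h
  -- overlap relation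
  have hOm : ∀ j : Fin N, (mu - lam j) * (u j ⬝ᵥ v) = t * (u j ⬝ᵥ g) := by
    intro j
    have h1 : u j ⬝ᵥ HN.mulVec v = lam j * (u j ⬝ᵥ v) := by
      rw [Matrix.dotProduct_mulVec, ← Matrix.mulVec_transpose, hsymm.eq, heig j,
        smul_dotProduct, smul_eq_mul]
    have h2 : u j ⬝ᵥ (fun k => HN.mulVec v k + g k * t) = u j ⬝ᵥ (fun k => mu * v k) := by
      congr 1
      ext k
      exact hrow k
    simp only [dotProduct, mul_add, Finset.sum_add_distrib] at h2
    have h3 : (∑ k, u j k * HN.mulVec v k) = u j ⬝ᵥ HN.mulVec v := rfl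
    rw [h3, h1] at h2
    have h4 : (∑ k, u j k * (g k * t)) = t * (u j ⬝ᵥ g) := by
      rw [dotProduct, Finset.mul_sum]
      exact Finset.sum_congr rfl fun k _ => by ring
    have h5 : (∑ k, u j k * (mu * v k)) = mu * (u j ⬝ᵥ v) := by
      rw [dotProduct, Finset.mul_sum]
      exact Finset.sum_congr rfl fun k _ => by ring
    rw [h4, h5] at h2
    nlinarith [h2]
  -- Parseval
  set U : Matrix (Fin N) (Fin N) ℝ := Matrix.of u with hU
  have hUUt : U * Uᵀ = 1 := by
    ext a b
    simp only [Matrix.mul_apply, Matrix.transpose_apply, Matrix.one_apply, hU, Matrix.of_apply]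
    simpa [dotProduct] using horth a b
  have hUtU : Uᵀ * U = 1 := mul_eq_one_comm.mp hUUt
  have hpars : ∀ a b : Fin N → ℝ, a ⬝ᵥ b = ∑ j, (u j ⬝ᵥ a) * (u j ⬝ᵥ b) := by
    intro a b
    have : a ⬝ᵥ b = a ⬝ᵥ (Uᵀ * U).mulVec b := by rw [hUtU, Matrix.one_mulVec]
    rw [this, ← Matrix.mulVec_mulVec, Matrix.dotProduct_mulVec, Matrix.vecMul_transpose]
    simp only [dotProduct, Matrix.mulVec, hU, Matrix.of_apply]
  -- norm decomposition
  have hnorm : v ⬝ᵥ v + t ^ 2 = 1 := by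
    have h := hu'_unit
    rw [dotProduct, Fin.sum_univ_castSucc] at h
    rw [dotProduct, pow_two]
    exact h
  -- gaps nonzero
  have hgap : ∀ j : Fin N, mu - lam j ≠ 0 := by
    intro j0 hj0
    have ht0 : t = 0 := by
      have h := hOm j0
      rw [hj0, zero_mul] at h
      rcases mul_eq_zero.mp h.symm with h | h
      · exact h
      · exact absurd h (hg j0)
    have hOmz : ∀ j : Fin N, u j ⬝ᵥ v = 0 := by
      intro j
      by_cases hjj : j = j0
      · subst hjj
        -- use last row: g ⬝ᵥ v = 0, and v ⬝ᵥ g = ∑ g_k Ω_k with Ω_k = 0 for k ≠ j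
        have hgv : g ⬝ᵥ v = 0 := by rw [ht0] at hlast; linarith
        have : g ⬝ᵥ v = ∑ k, (u k ⬝ᵥ g) * (u k ⬝ᵥ v) := hpars g v
        rw [hgv] at this
        have hzero : ∀ k, k ≠ j → (u k ⬝ᵥ g) * (u k ⬝ᵥ v) = 0 := by
          intro k hk
          have hd : mu - lam k ≠ 0 := by
            rw [sub_ne_zero]
            intro he
            exact hk (hmono.injective (by rw [← he, ← sub_eq_zero.mp hj0]))
          have := hOm k
          rw [ht0, zero_mul] at this
          have : u k ⬝ᵥ v = 0 := by
            rcases mul_eq_zero.mp this with h | h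
            · exact absurd h hd
            · exact h
          rw [this, mul_zero]
        have hsum : ∑ k, (u k ⬝ᵥ g) * (u k ⬝ᵥ v) = (u j ⬝ᵥ g) * (u j ⬝ᵥ v) :=
          Finset.sum_eq_single j (fun k _ hk => hzero k hk) (by simp)
        rw [hsum] at this
        rcases mul_eq_zero.mp this.symm with h | h
        · exact absurd h (hg j)
        · exact h
      · have hd : mu - lam j ≠ 0 := by
          rw [sub_ne_zero]
          intro he
          exact hjj (hmono.injective (by rw [← he, ← sub_eq_zero.mp hj0]))
        have := hOm j
        rw [ht0, zero_mul] at this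
        rcases mul_eq_zero.mp this with h | h
        · exact absurd h hd
        · exact h
    have hvv : v ⬝ᵥ v = 0 := by
      rw [hpars v v]
      apply Finset.sum_eq_zero
      intro j _
      rw [hOmz j, mul_zero]
    rw [hvv, ht0] at hnorm
    norm_num at hnorm
  refine ⟨hgap, ?_⟩
  -- the overlap equals u i ⬝ᵥ v
  have hov : u' ⬝ᵥ (Fin.snoc (u i) 0 : Fin (N + 1) → ℝ) = u i ⬝ᵥ v := by
    rw [dotProduct, dotProduct, Fin.sum_univ_castSucc]
    simp only [Fin.snoc_castSucc, Fin.snoc_last, mul_zero, add_zero]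
    exact Finset.sum_congr rfl fun k _ => mul_comm _ _
  rw [hov]
  -- key: t^2 * (1 + S) = 1
  set S : ℝ := ∑ j, ((u j ⬝ᵥ g) / (mu - lam j)) ^ 2 with hS
  have hOmval : ∀ j : Fin N, u j ⬝ᵥ v = t * (u j ⬝ᵥ g) / (mu - lam j) := by
    intro j
    rw [eq_div_iff (hgap j)]
    linarith [hOm j]
  have hT : t ^ 2 * (1 + S) = 1 := by
    have hvv : v ⬝ᵥ v = t ^ 2 * S := by
      rw [hpars v v, hS, Finset.mul_sum]
      congr 1
      ext j
      rw [hOmval j]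
      field_simp
    rw [hvv] at hnorm
    linarith
  have ht0 : t ≠ 0 := by
    intro h
    rw [h] at hT
    norm_num at hT
  have hSpos : 1 + S ≠ 0 := by
    intro h
    rw [h] at hT
    norm_num at hT
  rw [hOmval i]
  apply eq_inv_of_mul_eq_one_left
  have hΔ := hgap i
  have hgi := hg i
  have hkey : (t * (u i ⬝ᵥ g) / (mu - lam i)) ^ 2 *
      (((mu - lam i) / (u i ⬝ᵥ g)) ^ 2 * (1 + S)) = t ^ 2 * (1 + S) := by
    field_simp
  rw [hkey]
  exact hT
end

section
/- With the Wishart bordering setup, let z ∈ ℝ with z ∉ {0, λ_1, …, λ_N}. Then z is an eigenvalue of W^{(N+1)} = X_{N+1}ᵀX_{N+1} if and only if F(z) = 0, where F(z) := 1 + Σ_{i=1}^N ⟨v_i, g⟩²/(λ_i − z) − Γ/z. -/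
/-!
The nonzero eigenvalues of `Bᵀ B` and `B Bᵀ` coincide, and for `B = (X g)` we have
`B Bᵀ = X Xᵀ + g gᵀ`. In the orthonormal basis `(v_i, w_j)` of `ℝ^T` the matrix `X Xᵀ` is
diagonal with entries `λ_i` and `0`, so `z` is an eigenvalue of a diagonal matrix `diag μ`
plus the rank-one matrix `c cᵀ`, with `c = (⟨v_i, g⟩, ⟨w_j, g⟩)`. For `z ∉ {μ_i}` an eigenvector
`η` has coordinates `η_i = -(c ⬝ η) c_i / (μ_i - z)`, and pairing with `c` gives the secular
equation `1 + ∑ c_i² / (μ_i - z) = 0`, which is `F(z) = 0`.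
-/

open Matrix

/-- The bordered data matrix `X_{N+1} = (X g)`, obtained by appending the column `g`. -/
def borderCol {T N : ℕ} (X : Matrix (Fin T) (Fin N) ℝ) (g : Fin T → ℝ) :
    Matrix (Fin T) (Fin (N + 1)) ℝ :=
  fun t j => Fin.lastCases (g t) (fun j' => X t j') j

namespace Matrix

variable {m n R K : Type*} [Fintype m] [Fintype n]

theorem mulVec_dotProduct_eq_dotProduct_transpose_mulVec [CommSemiring R] (A : Matrix m n R)
    (x : n → R) (y : m → R) : A *ᵥ x ⬝ᵥ y = x ⬝ᵥ Aᵀ *ᵥ y := by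
  rw [dotProduct_comm, dotProduct_transpose_mulVec]

theorem of_sumElim_mul_transpose_eq_one {κ₁ κ₂ : Type*} [CommSemiring R] [DecidableEq κ₁]
    [DecidableEq κ₂] (v : κ₁ → m → R) (w : κ₂ → m → R)
    (hv : ∀ i j, v i ⬝ᵥ v j = if i = j then (1 : R) else 0)
    (hw : ∀ i j, w i ⬝ᵥ w j = if i = j then (1 : R) else 0) (hvw : ∀ i j, v i ⬝ᵥ w j = 0) :
    of (Sum.elim v w) * (of (Sum.elim v w))ᵀ = 1 := by
  ext p q
  change Sum.elim v w p ⬝ᵥ Sum.elim v w q = (1 : Matrix _ _ R) p q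
  rcases p with i | j <;> rcases q with k | l
  · simpa [one_apply] using hv i k
  · simpa using hvw i l
  · simpa [dotProduct_comm] using hvw k j
  · simpa [one_apply] using hw j l

theorem exists_mulVec_eq_smul_of_mul_comm [CommRing R] [NoZeroDivisors R]
    (A : Matrix m n R) (B : Matrix n m R) {z : R} (hz : z ≠ 0)
    (h : ∃ x, x ≠ 0 ∧ (A * B) *ᵥ x = z • x) : ∃ y, y ≠ 0 ∧ (B * A) *ᵥ y = z • y := by
  obtain ⟨x, hx, hABx⟩ := h
  refine ⟨B *ᵥ x, fun hBx => smul_ne_zero hz hx ?_, ?_⟩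
  · rw [← hABx, ← mulVec_mulVec, hBx, mulVec_zero]
  · rw [← mulVec_mulVec, mulVec_mulVec x A B, hABx, mulVec_smul]

theorem exists_mulVec_eq_smul_mul_comm_iff [CommRing R] [NoZeroDivisors R]
    (A : Matrix m n R) (B : Matrix n m R) {z : R} (hz : z ≠ 0) :
    (∃ x, x ≠ 0 ∧ (A * B) *ᵥ x = z • x) ↔ ∃ y, y ≠ 0 ∧ (B * A) *ᵥ y = z • y :=
  ⟨exists_mulVec_eq_smul_of_mul_comm A B hz, exists_mulVec_eq_smul_of_mul_comm B A hz⟩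

theorem exists_mulVec_eq_smul_conj_iff [CommRing R] [NoZeroDivisors R] [DecidableEq n]
    {A : Matrix m n R} {B : Matrix n m R} (hBA : B * A = 1) (M : Matrix n n R) {z : R}
    (hz : z ≠ 0) :
    (∃ x, x ≠ 0 ∧ (A * M * B) *ᵥ x = z • x) ↔ ∃ y, y ≠ 0 ∧ M *ᵥ y = z • y := by
  rw [exists_mulVec_eq_smul_mul_comm_iff (A * M) B hz, ← Matrix.mul_assoc, hBA, Matrix.one_mul]

theorem diagonal_add_vecMulVec_mulVec [CommRing R] [DecidableEq m] (μ c η : m → R) :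
    (diagonal μ + vecMulVec c c) *ᵥ η = fun i => μ i * η i + (c ⬝ᵥ η) * c i := by
  ext i
  simp [add_mulVec, mulVec_diagonal, vecMulVec_mulVec, mul_comm]

theorem exists_mulVec_eq_smul_diagonal_add_vecMulVec_iff [Field K] [DecidableEq m]
    (μ c : m → K) {z : K} (hz : ∀ i, μ i ≠ z) :
    (∃ η, η ≠ 0 ∧ (diagonal μ + vecMulVec c c) *ᵥ η = z • η) ↔
      1 + ∑ i, c i ^ 2 / (μ i - z) = 0 := by
  have hμz : ∀ i, μ i - z ≠ 0 := fun i => sub_ne_zero.mpr (hz i)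
  simp only [diagonal_add_vecMulVec_mulVec, funext_iff, Pi.smul_apply, smul_eq_mul]
  constructor
  · rintro ⟨η, hη, heq⟩
    have hcoord : ∀ i, η i = -(c ⬝ᵥ η) * c i / (μ i - z) := fun i => by
      rw [eq_div_iff (hμz i)]
      linear_combination heq i
    have hcη : c ⬝ᵥ η ≠ 0 := fun h0 => hη <| funext fun i => by simp [hcoord i, h0]
    have hdot : c ⬝ᵥ η = -(c ⬝ᵥ η) * ∑ i, c i ^ 2 / (μ i - z) := by
      conv_lhs => rw [dotProduct]
      rw [Finset.mul_sum]
      refine Finset.sum_congr rfl fun i _ => ?_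
      rw [hcoord i]
      ring
    have hpair : c ⬝ᵥ η * (1 + ∑ i, c i ^ 2 / (μ i - z)) = 0 := by linear_combination hdot
    exact (mul_eq_zero.mp hpair).resolve_left hcη
  · intro hF
    have hcη : c ⬝ᵥ (fun i => c i / (μ i - z)) = -1 := by
      simp only [dotProduct, ← mul_div_assoc, ← sq]
      linear_combination hF
    refine ⟨fun i => c i / (μ i - z), fun h0 => by simp [h0] at hcη, fun i => ?_⟩
    rw [hcη]
    field_simp [hμz i]
    ring

end Matrix

theorem borderCol_mul_transpose {T N : ℕ} (X : Matrix (Fin T) (Fin N) ℝ) (g : Fin T → ℝ) :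
    borderCol X g * (borderCol X g)ᵀ = X * Xᵀ + vecMulVec g g := by
  ext s t
  simp [mul_apply, Fin.sum_univ_castSucc, borderCol, vecMulVec_apply]

section SingularVectors

variable {m n ι : Type*} [Fintype m] [Fintype n] {X : Matrix m n ℝ} {lam : ι → ℝ}
  {u : ι → n → ℝ} {v : ι → m → ℝ}

theorem transpose_mulVec_eq_sqrt_smul
    (heig : ∀ i, (Xᵀ * X) *ᵥ u i = lam i • u i) (hv : ∀ i, v i = (√(lam i))⁻¹ • X *ᵥ u i)
    (i : ι) : Xᵀ *ᵥ v i = √(lam i) • u i := by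
  rw [hv, mulVec_smul, mulVec_mulVec, heig, smul_smul, inv_mul_eq_div, Real.div_sqrt]

theorem dotProduct_left_singular [DecidableEq ι] (hpos : ∀ i, 0 < lam i)
    (heig : ∀ i, (Xᵀ * X) *ᵥ u i = lam i • u i)
    (horth : ∀ i j, u i ⬝ᵥ u j = if i = j then (1 : ℝ) else 0)
    (hv : ∀ i, v i = (√(lam i))⁻¹ • X *ᵥ u i) (i j : ι) :
    v i ⬝ᵥ v j = if i = j then (1 : ℝ) else 0 := by
  conv_lhs => rw [hv i]
  rw [smul_dotProduct, mulVec_dotProduct_eq_dotProduct_transpose_mulVec,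
    transpose_mulVec_eq_sqrt_smul heig hv, dotProduct_smul, horth]
  split_ifs with hij
  · subst hij
    simp [(Real.sqrt_pos.mpr (hpos i)).ne']
  · simp

theorem dotProduct_left_singular_of_transpose_mulVec_eq_zero
    (hv : ∀ i, v i = (√(lam i))⁻¹ • X *ᵥ u i) {w : m → ℝ} (hw : Xᵀ *ᵥ w = 0) (i : ι) :
    v i ⬝ᵥ w = 0 := by
  rw [hv, smul_dotProduct, mulVec_dotProduct_eq_dotProduct_transpose_mulVec, hw,
    dotProduct_zero, smul_zero]

theorem of_sumElim_mul_mul_transpose_mul_transpose [DecidableEq ι] {κ : Type*} [DecidableEq κ]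
    (hpos : ∀ i, 0 < lam i) (heig : ∀ i, (Xᵀ * X) *ᵥ u i = lam i • u i)
    (horth : ∀ i j, u i ⬝ᵥ u j = if i = j then (1 : ℝ) else 0)
    (hv : ∀ i, v i = (√(lam i))⁻¹ • X *ᵥ u i) {w : κ → m → ℝ} (hwker : ∀ j, Xᵀ *ᵥ w j = 0) :
    of (Sum.elim v w) * (X * Xᵀ) * (of (Sum.elim v w))ᵀ = diagonal (Sum.elim lam 0) := by
  have hUX : of (Sum.elim v w) * X = of (Sum.elim (fun i => √(lam i) • u i) 0) := by
    ext p j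
    change (Sum.elim v w p ᵥ* X) j = _
    rcases p with i | l
    · simp [← mulVec_transpose, transpose_mulVec_eq_sqrt_smul heig hv]
    · simp [← mulVec_transpose, hwker]
  rw [← Matrix.mul_assoc, Matrix.mul_assoc (_ * X), ← transpose_mul, hUX]
  ext p q
  change Sum.elim _ _ p ⬝ᵥ Sum.elim _ _ q = _
  rcases p with i | j <;> rcases q with k | l
  · simp only [Sum.elim_inl, smul_dotProduct, dotProduct_smul, horth, diagonal_apply,
      Sum.inl.injEq, smul_eq_mul]
    split_ifs with hik
    · rw [hik, mul_one, Real.mul_self_sqrt (hpos k).le]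
    · simp
  all_goals simp [diagonal_apply]

end SingularVectors

theorem wishart_secular_equation_general
    (T N : ℕ) (hTN : N ≤ T)
    (X : Matrix (Fin T) (Fin N) ℝ)
    (lam : Fin N → ℝ) (hpos : ∀ i, 0 < lam i)
    (u : Fin N → Fin N → ℝ)
    (heig : ∀ i, (Xᵀ * X).mulVec (u i) = lam i • u i)
    (horth : ∀ i j, u i ⬝ᵥ u j = if i = j then (1 : ℝ) else 0)
    (v : Fin N → Fin T → ℝ)
    (hv : ∀ i, v i = (Real.sqrt (lam i))⁻¹ • X.mulVec (u i))
    (w : Fin (T - N) → Fin T → ℝ)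
    (hworth : ∀ i j, w i ⬝ᵥ w j = if i = j then (1 : ℝ) else 0)
    (hwker : ∀ j, Xᵀ.mulVec (w j) = 0)
    (g : Fin T → ℝ)
    (z : ℝ) (hz0 : z ≠ 0) (hz : ∀ i, z ≠ lam i) :
    (∃ vec : Fin (N + 1) → ℝ, vec ≠ 0 ∧
        ((borderCol X g)ᵀ * borderCol X g).mulVec vec = z • vec) ↔
      1 + (∑ i, (v i ⬝ᵥ g) ^ 2 / (lam i - z)) - (∑ j, (w j ⬝ᵥ g) ^ 2) / z = 0 := by
  set U : Matrix (Fin N ⊕ Fin (T - N)) (Fin T) ℝ := of (Sum.elim v w)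
  have hUtU : Uᵀ * U = 1 :=
    (mul_eq_one_comm_of_equiv (finSumFinEquiv.trans (finCongr (Nat.add_sub_cancel' hTN)))).mp <|
      of_sumElim_mul_transpose_eq_one v w (dotProduct_left_singular hpos heig horth hv) hworth
        fun i j => dotProduct_left_singular_of_transpose_mulVec_eq_zero hv (hwker j) i
  have hspec : ∀ p, Sum.elim lam (0 : Fin (T - N) → ℝ) p ≠ z := by
    rintro (i | j)
    exacts [(hz i).symm, hz0.symm]
  rw [exists_mulVec_eq_smul_mul_comm_iff _ _ hz0, borderCol_mul_transpose,
    ← exists_mulVec_eq_smul_conj_iff hUtU _ hz0, Matrix.mul_add, Matrix.add_mul,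
    of_sumElim_mul_mul_transpose_mul_transpose hpos heig horth hv hwker,
    mul_vecMulVec, vecMulVec_mul, vecMul_transpose,
    exists_mulVec_eq_smul_diagonal_add_vecMulVec_iff _ _ hspec, Fintype.sum_sum_type]
  change 1 + (∑ i, (v i ⬝ᵥ g) ^ 2 / (lam i - z) + ∑ j, (w j ⬝ᵥ g) ^ 2 / (0 - z)) = 0 ↔ _
  rw [zero_sub, ← Finset.sum_div, div_neg, ← sub_eq_add_neg, add_sub_assoc]

/-- **Secular equation for the eigenvalues (Wishart case).**
For `z ∉ {0, λ_1, …, λ_N}`, `z` is an eigenvalue of `W^{(N+1)} = X_{N+1}ᵀ X_{N+1}` if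
and only if `F(z) = 1 + ∑ᵢ ⟪vᵢ, g⟫²/(λᵢ - z) - Γ/z = 0`,
where `Γ = ∑ⱼ ⟪wⱼ, g⟫²`. -/
theorem wishart_secular_equation
    (T N : ℕ) (hTN : N ≤ T)
    (X : Matrix (Fin T) (Fin N) ℝ) (hrank : X.rank = N)
    (lam : Fin N → ℝ) (hmono : StrictMono lam) (hpos : ∀ i, 0 < lam i)
    (u : Fin N → Fin N → ℝ)
    (heig : ∀ i, (Xᵀ * X).mulVec (u i) = lam i • u i)
    (horth : ∀ i j, u i ⬝ᵥ u j = if i = j then (1 : ℝ) else 0)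
    (v : Fin N → Fin T → ℝ)
    (hv : ∀ i, v i = (Real.sqrt (lam i))⁻¹ • X.mulVec (u i))
    (w : Fin (T - N) → Fin T → ℝ)
    (hworth : ∀ i j, w i ⬝ᵥ w j = if i = j then (1 : ℝ) else 0)
    (hwker : ∀ j, Xᵀ.mulVec (w j) = 0)
    (g : Fin T → ℝ)
    (z : ℝ) (hz0 : z ≠ 0) (hz : ∀ i, z ≠ lam i) :
    (∃ vec : Fin (N + 1) → ℝ, vec ≠ 0 ∧
        ((borderCol X g)ᵀ * borderCol X g).mulVec vec = z • vec) ↔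
      1 + (∑ i, (v i ⬝ᵥ g) ^ 2 / (lam i - z)) - (∑ j, (w j ⬝ᵥ g) ^ 2) / z = 0 :=
  wishart_secular_equation_general T N hTN X lam hpos u heig horth v hv w hworth hwker g z hz0 hz
end

section
/- With the Wishart bordering setup, let μ be any eigenvalue of W^{(N+1)} with unit eigenvector u' ∈ ℝ^{N+1}, and write Ω_j := ⟨u', (u_j,0)⟩ for 1 ≤ j ≤ N, Ω_{N+1} := (u')_{N+1}, g_i := ⟨v_i, g⟩, and Δ_i := μ − λ_i. Then for all 1 ≤ i, j ≤ N with g_i ≠ 0, Δ_i ≠ 0, Δ_j ≠ 0 and Ω_i ≠ 0: Ω_j/Ω_i = (g_j/g_i) · √(λ_j/λ_i) · (Δ_i/Δ_j), and Ω_{N+1}/Ω_i = (Δ_i/g_i) · (1/√λ_i). -/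
open Matrix

/-- **Ratio identities for the overlaps (Wishart case).**
For any eigenvalue `μ` of `W^{(N+1)} = X_{N+1}ᵀ X_{N+1}` with unit eigenvector `u'`,
writing `Ωⱼ = ⟪u', (uⱼ,0)⟫`, `Ω_{N+1} = (u')_{N+1}`, `gᵢ = ⟪vᵢ, g⟫`, `Δᵢ = μ - λᵢ`:
whenever the denominators do not vanish,
`Ωⱼ/Ωᵢ = (gⱼ/gᵢ)·√(λⱼ/λᵢ)·(Δᵢ/Δⱼ)` and `Ω_{N+1}/Ωᵢ = (Δᵢ/gᵢ)·(1/√λᵢ)`. -/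
theorem wishart_overlap_ratio_identities
    (T N : ℕ) (hTN : N ≤ T)
    (X : Matrix (Fin T) (Fin N) ℝ) (hrank : X.rank = N)
    (lam : Fin N → ℝ) (hmono : StrictMono lam) (hpos : ∀ i, 0 < lam i)
    (u : Fin N → Fin N → ℝ)
    (heig : ∀ i, (Xᵀ * X).mulVec (u i) = lam i • u i)
    (horth : ∀ i j, u i ⬝ᵥ u j = if i = j then (1 : ℝ) else 0)
    (v : Fin N → Fin T → ℝ)
    (hv : ∀ i, v i = (Real.sqrt (lam i))⁻¹ • X.mulVec (u i))
    (g : Fin T → ℝ)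
    (mu : ℝ) (u' : Fin (N + 1) → ℝ)
    (hu'_unit : u' ⬝ᵥ u' = 1)
    (hu'_eig : ((borderCol X g)ᵀ * borderCol X g).mulVec u' = mu • u') :
    ∀ i j : Fin N,
      v i ⬝ᵥ g ≠ 0 → mu - lam i ≠ 0 → mu - lam j ≠ 0 →
      u' ⬝ᵥ (Fin.snoc (u i) 0 : Fin (N + 1) → ℝ) ≠ 0 →
      (u' ⬝ᵥ (Fin.snoc (u j) 0 : Fin (N + 1) → ℝ)) /
          (u' ⬝ᵥ (Fin.snoc (u i) 0 : Fin (N + 1) → ℝ)) =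
        ((v j ⬝ᵥ g) / (v i ⬝ᵥ g)) * Real.sqrt (lam j / lam i) *
          ((mu - lam i) / (mu - lam j)) ∧
      u' (Fin.last N) / (u' ⬝ᵥ (Fin.snoc (u i) 0 : Fin (N + 1) → ℝ)) =
        ((mu - lam i) / (v i ⬝ᵥ g)) * (1 / Real.sqrt (lam i)) := by

  intro i j hgi hDi hDj hOi
  have hsq : ∀ k : Fin N, Real.sqrt (lam k) ≠ 0 := fun k =>
    ne_of_gt (Real.sqrt_pos.mpr (hpos k))
  have hXg : ∀ k : Fin N, X.mulVec (u k) ⬝ᵥ g = Real.sqrt (lam k) * (v k ⬝ᵥ g) := by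
    intro k
    rw [hv k, smul_dotProduct, smul_eq_mul, ← mul_assoc,
      mul_inv_cancel₀ (hsq k), one_mul]
  have hBmul : ∀ (w : Fin N → ℝ) (c : ℝ),
      (borderCol X g).mulVec (Fin.snoc w c) = X.mulVec w + c • g := by
    intro w c
    funext t
    simp only [Matrix.mulVec, dotProduct, Pi.add_apply, Pi.smul_apply, smul_eq_mul]
    rw [Fin.sum_univ_castSucc]
    simp [borderCol, mul_comm]
  have hdot : ∀ k : Fin N,
      u' ⬝ᵥ (Fin.snoc (u k) 0 : Fin (N + 1) → ℝ) = Fin.init u' ⬝ᵥ u k := by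
    intro k
    simp only [dotProduct, Fin.sum_univ_castSucc, Fin.snoc_castSucc, Fin.snoc_last,
      mul_zero, add_zero, Fin.init]
  have key : ∀ k : Fin N,
      (mu - lam k) * (u' ⬝ᵥ (Fin.snoc (u k) 0 : Fin (N + 1) → ℝ)) =
        u' (Fin.last N) * (Real.sqrt (lam k) * (v k ⬝ᵥ g)) := by
    intro k
    have h1 := congrArg (fun z => (Fin.snoc (u k) 0 : Fin (N + 1) → ℝ) ⬝ᵥ z) hu'_eig
    rw [Matrix.dotProduct_mulVec, ← Matrix.vecMul_vecMul, Matrix.vecMul_transpose, hBmul,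
      zero_smul, add_zero] at h1
    have h2 : Matrix.vecMul (X.mulVec (u k)) (borderCol X g) ⬝ᵥ u' =
        X.mulVec (u k) ⬝ᵥ (borderCol X g).mulVec u' := by
      rw [Matrix.dotProduct_mulVec]
    rw [h2] at h1
    have h3 : (borderCol X g).mulVec u' = X.mulVec (Fin.init u') + u' (Fin.last N) • g := by
      conv_lhs => rw [← Fin.snoc_init_self u']
      rw [hBmul]
    rw [h3, dotProduct_add, dotProduct_smul, smul_eq_mul] at h1
    have h4 : X.mulVec (u k) ⬝ᵥ X.mulVec (Fin.init u') = lam k * (u k ⬝ᵥ Fin.init u') := by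
      rw [Matrix.dotProduct_mulVec, ← Matrix.mulVec_transpose, Matrix.mulVec_mulVec,
        heig k, smul_dotProduct, smul_eq_mul]
    rw [h4, hXg k] at h1
    have h5 : (Fin.snoc (u k) 0 : Fin (N + 1) → ℝ) ⬝ᵥ (mu • u') =
        mu * (Fin.init u' ⬝ᵥ u k) := by
      rw [dotProduct_smul, smul_eq_mul, dotProduct_comm, hdot k]
    have h6 : u k ⬝ᵥ Fin.init u' = Fin.init u' ⬝ᵥ u k := dotProduct_comm _ _
    rw [h5, h6] at h1
    rw [hdot k]
    linear_combination -h1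
  have keyi := key i
  have keyj := key j
  set Oi := u' ⬝ᵥ (Fin.snoc (u i) 0 : Fin (N + 1) → ℝ) with hOidef
  set Oj := u' ⬝ᵥ (Fin.snoc (u j) 0 : Fin (N + 1) → ℝ) with hOjdef
  set c := u' (Fin.last N) with hcdef
  set gi := v i ⬝ᵥ g with hgidef
  set gj := v j ⬝ᵥ g with hgjdef
  set si := Real.sqrt (lam i) with hsidef
  set sj := Real.sqrt (lam j) with hsjdef
  have hsi : si ≠ 0 := hsq i
  have hsj : sj ≠ 0 := hsq j
  have hsqrt_div : Real.sqrt (lam j / lam i) = sj / si :=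
    Real.sqrt_div (hpos j).le _
  constructor
  · rw [hsqrt_div]
    field_simp
    linear_combination (gi * si) * keyj - (gj * sj) * keyi
  · field_simp
    linear_combination -keyi
end
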